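/- arXiv:1807.04238 — 3 statements merged into one kernel-verified Lean document; each statement's English description precedes it below -/
import Mathlib

section
/- Let F be a field and let M be an n×n monomial matrix over F; write M = D·P where D is an invertible diagonal matrix and P is the permutation matrix of a permutation σ. For each cycle C_j of σ (including fixed points as cycles of length 1), let n_j be its length and let c_j be the product of the nonzero entries of M in the positions of that cycle. Then the characteristic polynomial of M equals ∏_j (x^{n_j} - c_j). -/
/-!
The span of the basis vectors of a cycle of `σ` is `M`-invariant, so `M` is block diagonal with
one block per cycle, and on a cycle of length `n` the block is a weighted cyclic shift. In the
Leibniz expansion of `det (X - B)` for such a block, a permutation `π` contributes only if every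
`π i` is `i` or `σ i`; once `π` moves one point it must follow `σ` around the whole cycle, so
only `π = 1`, giving `X ^ n`, and `π = σ`, giving `sign σ · (-1) ^ n · c = -c`, survive.
-/

open Finset Function Polynomial

namespace Equiv.Perm

variable {α : Type*} {f g : Perm α} {s : Finset α} {a : α}

theorem IsCycleOn.prod_range_pow_apply {M : Type*} [CommMonoid M] (hf : f.IsCycleOn s)
    (ha : a ∈ s) (v : α → M) : ∏ k ∈ range #s, v ((f ^ k) a) = ∏ x ∈ s, v x := by
  refine prod_nbij (fun k => (f ^ k) a) (fun k _ => hf.1.mapsTo.perm_pow k ha) ?_ ?_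
    fun _ _ => rfl
  · intro k hk l hl h
    exact ((hf.pow_apply_eq_pow_apply ha).1 h).eq_of_lt_of_lt (mem_range.1 hk) (mem_range.1 hl)
  · intro x hx
    obtain ⟨n, hn, rfl⟩ := hf.exists_pow_eq ha hx
    exact ⟨n, mem_range.2 hn, rfl⟩

theorem IsCycleOn.minimalPeriod_eq_card (hf : f.IsCycleOn s) (ha : a ∈ s) :
    minimalPeriod f a = #s := by
  have h n : minimalPeriod f a ∣ n ↔ #s ∣ n := by
    rw [← isPeriodicPt_iff_minimalPeriod_dvd, IsPeriodicPt, IsFixedPt, iterate_eq_pow,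
      hf.pow_apply_eq ha]
  exact Nat.dvd_antisymm ((h _).2 dvd_rfl) ((h _).1 dvd_rfl)

theorem isCycleOn_sameCycle (f : Perm α) (a : α) : f.IsCycleOn {x | f.SameCycle a x} :=
  ⟨f.bijOn fun _ => sameCycle_apply_right, fun _ hx _ hy => hx.symm.trans hy⟩

theorem eq_one_or_eq_of_forall_apply_eq_or_apply_eq [Finite α] (hg : ∀ x y, g.SameCycle x y)
    (h : ∀ x, f x = x ∨ f x = g x) : f = 1 ∨ f = g := by
  by_cases hfix : ∀ x, f x = x
  · exact .inl (ext hfix)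
  push Not at hfix
  obtain ⟨a, ha⟩ := hfix
  have hstep : ∀ n : ℕ, f ((g ^ n) a) = g ((g ^ n) a) ∧ f ((g ^ n) a) ≠ (g ^ n) a := by
    intro n
    induction n with
    | zero => exact ⟨(h a).resolve_left ha, ha⟩
    | succ n ih =>
      rw [pow_succ', mul_apply, ← ih.1]
      have hmoved : f (f ((g ^ n) a)) ≠ f ((g ^ n) a) := f.injective.ne ih.2
      exact ⟨(h _).resolve_left hmoved, hmoved⟩
  refine .inr (ext fun y => ?_)
  obtain ⟨n, rfl⟩ := (hg a y).exists_nat_pow_eq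
  exact (hstep n).1

end Equiv.Perm

namespace Matrix

open Equiv

variable {ι R : Type*} [DecidableEq ι] (σ : Perm ι) (d : ι → R)

section Zero

variable [Zero R]

def monomialMatrix : Matrix ι ι R :=
  of fun i j => if σ j = i then d i else 0

@[simp]
theorem monomialMatrix_apply (i j : ι) : monomialMatrix σ d i j = if σ j = i then d i else 0 :=
  rfl

theorem blockTriangular_monomialMatrix {β : Type*} [Preorder β] {b : ι → β}
    (hb : ∀ i, b (σ i) = b i) : (monomialMatrix σ d).BlockTriangular b := by
  intro i j hij
  rw [monomialMatrix_apply, if_neg]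
  rintro rfl
  exact (hb j ▸ hij).false

theorem toSquareBlockProp_monomialMatrix {p : ι → Prop} (hp : ∀ i, p (σ i) ↔ p i) :
    (monomialMatrix σ d).toSquareBlockProp p = monomialMatrix (σ.subtypePerm hp) (d ·) := by
  ext i j
  simp [toSquareBlockProp_def, Subtype.ext_iff]

end Zero

variable [Fintype ι]

theorem diagonal_mul_eq_monomialMatrix [NonAssocSemiring R] {P : Matrix ι ι R}
    (hP : ∀ i j, P i j = if σ j = i then 1 else 0) : diagonal d * P = monomialMatrix σ d := by
  ext i j
  simp [diagonal_mul, hP]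

variable [CommRing R]

theorem charpoly_monomialMatrix_of_isCycleOn_univ [Nonempty ι] (hσ : σ.IsCycleOn Set.univ) :
    (monomialMatrix σ d).charpoly = X ^ Fintype.card ι - C (∏ i, d (σ i)) := by
  rcases subsingleton_or_nontrivial ι with hι | hι
  · obtain ⟨a⟩ := ‹Nonempty ι›
    have : Unique ι := uniqueOfSubsingleton a
    simp [charpoly, det_unique, charmatrix_apply_eq, Subsingleton.elim (σ default) default]
  have hmoved i : σ i ≠ i := hσ.apply_ne Set.nontrivial_univ (Set.mem_univ i)
  have hvanish (π : Perm ι) (hπ : π ≠ 1 ∧ π ≠ σ) :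
      Perm.sign π • ∏ i, (monomialMatrix σ d).charmatrix (π i) i = 0 := by
    obtain ⟨i, hi⟩ : ∃ i, π i ≠ i ∧ π i ≠ σ i := by
      by_contra! h
      exact (Perm.eq_one_or_eq_of_forall_apply_eq_or_apply_eq
        (fun x y => hσ.2 (Set.mem_univ x) (Set.mem_univ y))
        fun i => or_iff_not_imp_left.2 (h i)).elim hπ.1 hπ.2
    refine smul_eq_zero_of_right _ (prod_eq_zero (mem_univ i) ?_)
    rw [charmatrix_apply_ne _ _ _ hi.1, monomialMatrix_apply, if_neg (Ne.symm hi.2), C_0, neg_zero]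
  have hsign : Perm.sign σ = -(-1) ^ Fintype.card ι := by
    have hcycle : σ.IsCycle := Perm.isCycle_iff_exists_isCycleOn.2
      ⟨_, Set.nontrivial_univ, hσ, fun x _ => Set.mem_univ x⟩
    rw [hcycle.sign, eq_univ_of_forall fun i => Perm.mem_support.2 (hmoved i), card_univ]
  obtain ⟨a⟩ := ‹Nonempty ι›
  rw [charpoly, det_apply, Fintype.sum_eq_add 1 σ (fun h => hmoved a (h ▸ rfl)) hvanish]
  have hid : ∏ i, (monomialMatrix σ d).charmatrix ((1 : Perm ι) i) i = X ^ Fintype.card ι := by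
    simp [charmatrix_apply_eq, hmoved]
  have hcyc : ∏ i, (monomialMatrix σ d).charmatrix (σ i) i =
      (-1) ^ Fintype.card ι * C (∏ i, d (σ i)) := by
    simp [charmatrix_apply_ne _ _ _ (hmoved _), prod_neg]
  rw [hid, hcyc, hsign, map_one, one_smul, Units.smul_def, zsmul_eq_mul]
  push_cast
  rw [← mul_assoc, neg_mul, ← mul_pow, neg_one_mul, neg_neg, one_pow]
  ring

theorem charpoly_toSquareBlockProp_monomialMatrix_sameCycle (r : ι) :
    ((monomialMatrix σ d).toSquareBlockProp (σ.SameCycle r)).charpoly =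
      X ^ minimalPeriod σ r - C (∏ k ∈ range (minimalPeriod σ r), d (σ ((σ ^ k) r))) := by
  have hcycle := Perm.isCycleOn_sameCycle σ r
  have hsub : (σ.subtypePerm fun _ => Perm.sameCycle_apply_right :
      Perm {i // σ.SameCycle r i}).IsCycleOn Set.univ := hcycle.subtypePerm
  have : Nonempty {i // σ.SameCycle r i} := ⟨⟨r, .refl σ r⟩⟩
  rw [toSquareBlockProp_monomialMatrix σ d fun _ => Perm.sameCycle_apply_right,
    charpoly_monomialMatrix_of_isCycleOn_univ _ _ hsub]
  set s := univ.filter (σ.SameCycle r)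
  have hs : σ.IsCycleOn s := by simpa [s] using hcycle
  have hr : r ∈ s := mem_filter.2 ⟨mem_univ r, .refl σ r⟩
  rw [Fintype.card_subtype, hs.minimalPeriod_eq_card hr,
    hs.prod_range_pow_apply hr fun i => d (σ i),
    prod_subtype s (p := σ.SameCycle r) fun _ => by simp [s]]
  rfl

theorem charpoly_monomialMatrix (S : Finset ι) (hS : ∀ i, ∃! r, r ∈ S ∧ σ.SameCycle r i) :
    (monomialMatrix σ d).charpoly = ∏ r ∈ S,
      (X ^ minimalPeriod σ r - C (∏ k ∈ range (minimalPeriod σ r), d (σ ((σ ^ k) r)))) := by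
  choose rep hrep hrep_unique using hS
  have hrep_eq {r i : ι} (hr : r ∈ S) : rep i = r ↔ σ.SameCycle r i :=
    ⟨fun h => h ▸ (hrep i).2, fun h => (hrep_unique i r ⟨hr, h⟩).symm⟩
  have hrep_apply (i : ι) : rep (σ i) = rep i :=
    (hrep_eq (hrep i).1).2 (Perm.sameCycle_apply_right.2 (hrep i).2)
  let e := Fintype.equivFin ι
  have hblock := blockTriangular_monomialMatrix σ d (b := e ∘ rep)
    fun i => congrArg e (hrep_apply i)
  have himage : univ.image (e ∘ rep) = S.image e := by
    ext
    simp only [mem_image, mem_univ, true_and, Function.comp_apply]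
    exact ⟨fun ⟨i, hi⟩ => ⟨rep i, (hrep i).1, hi⟩,
      fun ⟨r, hr, hre⟩ => ⟨r, by rw [(hrep_eq hr).2 (.refl σ r), hre]⟩⟩
  rw [hblock.charpoly, himage, prod_image e.injective.injOn]
  refine prod_congr rfl fun r hr => ?_
  rw [← charpoly_toSquareBlockProp_monomialMatrix_sameCycle σ d r,
    ← charpoly_reindex (Equiv.subtypeEquivRight fun i => e.apply_eq_iff_eq.trans (hrep_eq hr))]
  rfl

end Matrix

theorem stmt_10_general {F : Type*} [Field F] {ι : Type*} [Fintype ι] [DecidableEq ι]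
    (σ : Equiv.Perm ι) (d : ι → F)
    (P M : Matrix ι ι F)
    (hP : ∀ i j, P i j = if σ j = i then 1 else 0)
    (hM : M = Matrix.diagonal d * P)
    (R : Finset ι) (hR : ∀ i : ι, ∃! r, r ∈ R ∧ σ.SameCycle r i) :
    M.charpoly =
      ∏ r ∈ R,
        ((Polynomial.X : F[X]) ^ (Function.minimalPeriod σ r) -
          Polynomial.C (∏ k ∈ Finset.range (Function.minimalPeriod σ r),
            M (σ ((σ ^ k) r)) ((σ ^ k) r))) := by
  rw [hM, Matrix.diagonal_mul_eq_monomialMatrix σ d hP, Matrix.charpoly_monomialMatrix σ d R hR]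
  simp only [Matrix.monomialMatrix_apply, if_pos]

/-- Characteristic polynomial of a monomial matrix `M = D · P`, where `D` is an
invertible diagonal matrix and `P` is the permutation matrix of `σ`.  The set
`R` consists of one representative from each cycle of `σ` (including fixed points
as cycles of length 1); for a representative `r`, the cycle length is
`Function.minimalPeriod σ r` and the product of the nonzero entries of `M` along
that cycle is `∏ k in range ℓ, M (σ (σ^k r)) (σ^k r)`.  Then
`charpoly M = ∏_j (X ^ n_j - c_j)`. -/
theorem stmt_10 {F : Type*} [Field F] {ι : Type*} [Fintype ι] [DecidableEq ι]
    (σ : Equiv.Perm ι) (d : ι → F) (hd : ∀ i, d i ≠ 0)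
    (P M : Matrix ι ι F)
    (hP : ∀ i j, P i j = if σ j = i then 1 else 0)
    (hM : M = Matrix.diagonal d * P)
    (R : Finset ι) (hR : ∀ i : ι, ∃! r, r ∈ R ∧ σ.SameCycle r i) :
    M.charpoly =
      ∏ r ∈ R,
        ((Polynomial.X : F[X]) ^ (Function.minimalPeriod σ r) -
          Polynomial.C (∏ k ∈ Finset.range (Function.minimalPeriod σ r),
            M (σ ((σ ^ k) r)) ((σ ^ k) r))) :=
  stmt_10_general σ d P M hP hM R hR
end

section
/- Let t ≥ 2 and n = 2^{t-1} - 1. Then A_{(t-1)} = J_n · (A_{(t-1)})ᵀ over F_2. -/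
/-- The unipotent Jordan block of size `n` over `F₂`: `1`'s on the main diagonal
and on the superdiagonal, `0`'s elsewhere. -/
def Jmat (n : ℕ) : Matrix (Fin n) (Fin n) (ZMod 2) :=
  fun i j => if (j : ℕ) = (i : ℕ) ∨ (j : ℕ) = (i : ℕ) + 1 then 1 else 0

/-- The `s`-fold Kronecker power of the `2 × 2` matrix `[[1,1],[1,0]]` over `F₂`. -/
def kronPow : (s : ℕ) → Matrix (Fin (2 ^ s)) (Fin (2 ^ s)) (ZMod 2)
  | 0 => 1
  | s + 1 =>
      Matrix.reindex (finProdFinEquiv.trans (finCongr (by ring)))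
        (finProdFinEquiv.trans (finCongr (by ring)))
        (Matrix.kroneckerMap (· * ·)
          (!![1, 1; 1, 0] : Matrix (Fin 2) (Fin 2) (ZMod 2)) (kronPow s))

/-- The matrix `A_{(s)}`: the `(2^s - 1) × (2^s - 1)` matrix obtained from the
`s`-fold Kronecker power of `[[1,1],[1,0]]` by deleting its first row and its
last column. -/
def Amat (s : ℕ) : Matrix (Fin (2 ^ s - 1)) (Fin (2 ^ s - 1)) (ZMod 2) :=
  (kronPow s).submatrix
    (fun i => Fin.cast (Nat.sub_add_cancel Nat.one_le_two_pow) i.succ)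
    (fun j => Fin.cast (Nat.sub_add_cancel Nat.one_le_two_pow) j.castSucc)

/-!
Write `c x y = [x &&& y = 0] ∈ F₂` (`bitsDisjoint`). Peeling off the top binary digit in the
recursion for the Kronecker power shows `K i j = c i j`, hence `A i j = c (i + 1) j`. By Lucas'
theorem `c x y ≡ C(x + y, x) mod 2`, so `c` is symmetric and obeys Pascal's rule
`c (x + 1) (y + 1) = c (x + 1) y + c x (y + 1)`. Entry `(i, j)` of `J Aᵀ` is
`c (j + 1) i + c (j + 1) (i + 1)`, which Pascal's rule turns into `c (i + 1) j`. In the last row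
the second term is missing, but there `i + 1 = 2 ^ s - 1` has all digits set, so it vanishes anyway.
-/

def bitsDisjoint (x y : ℕ) : ZMod 2 := if x &&& y = 0 then 1 else 0

theorem bitsDisjoint_eq_mul_div_mod (s x y : ℕ) :
    bitsDisjoint x y =
      bitsDisjoint (x / 2 ^ s) (y / 2 ^ s) * bitsDisjoint (x % 2 ^ s) (y % 2 ^ s) := by
  have key : x &&& y = 0 ↔ x / 2 ^ s &&& y / 2 ^ s = 0 ∧ x % 2 ^ s &&& y % 2 ^ s = 0 := by
    rw [← Nat.and_div_two_pow, ← Nat.and_mod_two_pow]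
    constructor
    · intro h; simp [h]
    · rintro ⟨h1, h2⟩; rw [← Nat.div_add_mod (x &&& y) (2 ^ s), h1, h2]; rfl
  simp only [bitsDisjoint, ite_zero_mul_ite_zero, mul_one, key]

theorem kronPow_apply (s : ℕ) (i j : Fin (2 ^ s)) : kronPow s i j = bitsDisjoint i j := by
  induction s with
  | zero =>
    fin_cases i; fin_cases j; rfl
  | succ s ih =>
    have base (a b : Fin 2) : !![1, 1; 1, 0] a b = bitsDisjoint a b := by
      fin_cases a <;> fin_cases b <;> rfl
    rw [bitsDisjoint_eq_mul_div_mod s]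
    simp only [kronPow, Matrix.reindex_apply, Matrix.submatrix_apply, Matrix.kroneckerMap_apply,
      Equiv.symm_trans_apply, finProdFinEquiv_symm_apply, ih, base]
    rfl

theorem bitsDisjoint_two_mul_two_mul (a b : ℕ) :
    bitsDisjoint (2 * a) (2 * b) = bitsDisjoint a b := by
  rw [bitsDisjoint_eq_mul_div_mod 1]
  simp [bitsDisjoint]

theorem bitsDisjoint_two_mul_add_one_two_mul (a b : ℕ) :
    bitsDisjoint (2 * a + 1) (2 * b) = bitsDisjoint a b := by
  rw [bitsDisjoint_eq_mul_div_mod 1]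
  simp [bitsDisjoint, Nat.mul_add_div]

theorem bitsDisjoint_two_mul_two_mul_add_one (a b : ℕ) :
    bitsDisjoint (2 * a) (2 * b + 1) = bitsDisjoint a b := by
  rw [bitsDisjoint_eq_mul_div_mod 1]
  simp [bitsDisjoint, Nat.mul_add_div]

theorem bitsDisjoint_two_mul_add_one_two_mul_add_one (a b : ℕ) :
    bitsDisjoint (2 * a + 1) (2 * b + 1) = 0 := by
  rw [bitsDisjoint_eq_mul_div_mod 1]
  simp [bitsDisjoint, Nat.mul_add_div]

theorem bitsDisjoint_succ_succ (x y : ℕ) :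
    bitsDisjoint (x + 1) (y + 1) = bitsDisjoint (x + 1) y + bitsDisjoint x (y + 1) := by
  induction x using Nat.strong_induction_on generalizing y with
  | _ x ih =>
  have two_mul_add_two (n : ℕ) : 2 * n + 1 + 1 = 2 * (n + 1) := by ring
  obtain ⟨q, rfl | rfl⟩ := Nat.even_or_odd' x <;>
    obtain ⟨r, rfl | rfl⟩ := Nat.even_or_odd' y <;>
    simp only [two_mul_add_two, bitsDisjoint_two_mul_two_mul, bitsDisjoint_two_mul_add_one_two_mul,
      bitsDisjoint_two_mul_two_mul_add_one, bitsDisjoint_two_mul_add_one_two_mul_add_one,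
      CharTwo.add_self_eq_zero, zero_add, add_zero]
  exact ih q (by omega) r

theorem bitsDisjoint_comm (x y : ℕ) : bitsDisjoint x y = bitsDisjoint y x := by
  rw [bitsDisjoint, bitsDisjoint, Nat.land_comm]

theorem bitsDisjoint_two_pow_sub_one {s x : ℕ} (hx0 : 0 < x) (hx : x < 2 ^ s) :
    bitsDisjoint x (2 ^ s - 1) = 0 := by
  simp [bitsDisjoint, Nat.and_two_pow_sub_one_of_lt_two_pow hx, hx0.ne']

theorem Jmat_mul_apply {n : ℕ} {β : Type*} (M : Matrix (Fin n) β (ZMod 2)) (i : Fin n) (j : β) :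
    (Jmat n * M) i j = M i j + if h : (i : ℕ) + 1 < n then M ⟨i + 1, h⟩ j else 0 := by
  have hdiag : Jmat n i i = 1 := by simp [Jmat]
  rw [Matrix.mul_apply]
  split_ifs with h
  · rw [Fintype.sum_eq_add i ⟨i + 1, h⟩ (by simp [Fin.ext_iff])]
    · simp [Jmat]
    · intro k hk
      simp [Jmat, Fin.ext_iff] at hk ⊢
      omega
  · rw [Fintype.sum_eq_single i]
    · simp [hdiag]
    · intro k hk
      simp [Jmat, Fin.ext_iff] at hk ⊢
      omega

theorem Amat_apply (s : ℕ) (i j : Fin (2 ^ s - 1)) : Amat s i j = bitsDisjoint (i + 1) j := by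
  simp [Amat, kronPow_apply]

theorem Amat_eq_Jmat_mul_transpose (s : ℕ) : Amat s = Jmat (2 ^ s - 1) * (Amat s).transpose := by
  ext i j
  have hnext : (if h : (i : ℕ) + 1 < 2 ^ s - 1 then (Amat s).transpose ⟨i + 1, h⟩ j else 0)
      = bitsDisjoint (j + 1) (i + 1) := by
    split_ifs with h
    · simp [Amat_apply]
    · rw [show (i : ℕ) + 1 = 2 ^ s - 1 by omega,
        bitsDisjoint_two_pow_sub_one (by omega) (by omega)]
  rw [Jmat_mul_apply, hnext, Matrix.transpose_apply, Amat_apply, Amat_apply,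
    bitsDisjoint_comm (j + 1), bitsDisjoint_comm (j + 1), bitsDisjoint_succ_succ, add_left_comm,
    CharTwo.add_self_eq_zero, add_zero]

theorem stmt_12_general (t : ℕ) :
    Amat (t - 1) = Jmat (2 ^ (t - 1) - 1) * (Amat (t - 1)).transpose :=
  Amat_eq_Jmat_mul_transpose (t - 1)

theorem stmt_12 (t : ℕ) (ht : 2 ≤ t) :
    Amat (t - 1) = Jmat (2 ^ (t - 1) - 1) * (Amat (t - 1)).transpose :=
  stmt_12_general t
end

section
/- Let t ≥ 2, n = 2^{t-1} - 1, let v = (0,…,0,1)ᵀ ∈ F_2^n be the last standard basis vector, and consider the affine permutation f of F_2^n given by f(a) = J_n·a + v. Then every orbit of the cyclic group generated by f on F_2^n has length exactly 2^{t-1} = n + 1. -/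
/-- The last standard basis vector `(0, …, 0, 1)ᵀ` of `F₂ⁿ`. -/
def lastBasis (n : ℕ) : Fin n → ZMod 2 :=
  fun i => if (i : ℕ) = n - 1 then 1 else 0

/-- The nilpotent part: `1`'s on the superdiagonal. -/
def Nmat (n : ℕ) : Matrix (Fin n) (Fin n) (ZMod 2) :=
  fun i j => if (j : ℕ) = (i : ℕ) + 1 then 1 else 0

lemma Jmat_eq (n : ℕ) : Jmat n = 1 + Nmat n := by
  ext i j
  simp only [Jmat, Nmat, Matrix.add_apply, Matrix.one_apply]
  by_cases h1 : (j : ℕ) = (i : ℕ)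
  · have hij : i = j := Fin.ext h1.symm
    rw [if_pos (Or.inl h1), if_pos hij, if_neg (by omega), add_zero]
  · have hij : ¬ i = j := fun h => h1 (congrArg Fin.val h).symm
    by_cases h2 : (j : ℕ) = (i : ℕ) + 1
    · rw [if_pos (Or.inr h2), if_neg hij, if_pos h2, zero_add]
    · rw [if_neg (by tauto), if_neg hij, if_neg h2, add_zero]

lemma Nmat_pow (n k : ℕ) (i j : Fin n) :
    ((Nmat n) ^ k) i j = if (j : ℕ) = (i : ℕ) + k then 1 else 0 := by
  induction k generalizing j with
  | zero =>
    simp [Matrix.one_apply, Fin.ext_iff, eq_comm]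
  | succ k ih =>
    rw [pow_succ, Matrix.mul_apply]
    by_cases h : (i : ℕ) + k < n
    · rw [Finset.sum_eq_single (⟨(i : ℕ) + k, h⟩ : Fin n)]
      · rw [ih]
        simp only [Nmat]
        simp [← Nat.add_assoc]
      · intro l _ hl
        rw [ih]
        have hl' : ¬ (l : ℕ) = (i : ℕ) + k := by
          intro hc; exact hl (Fin.ext hc)
        rw [if_neg hl', zero_mul]
      · simp
    · have h1 : ∀ l : Fin n, ((Nmat n) ^ k) i l = 0 := by
        intro l
        rw [ih]
        have := l.isLt
        rw [if_neg (by omega)]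
      simp only [h1, zero_mul, Finset.sum_const_zero]
      have := j.isLt
      rw [if_neg (by omega)]

lemma Nmat_pow_n (n k : ℕ) (hk : n ≤ k) : (Nmat n) ^ k = 0 := by
  ext i j
  rw [Nmat_pow]
  have := j.isLt
  simp only [Matrix.zero_apply]
  rw [if_neg (by omega)]

lemma matrix_add_self {n : ℕ} (A : Matrix (Fin n) (Fin n) (ZMod 2)) : A + A = 0 := by
  ext i j
  simp only [Matrix.add_apply, Matrix.zero_apply]
  exact CharTwo.add_self_eq_zero _

lemma Jmat_pow_two_pow (n s : ℕ) : (Jmat n) ^ (2 ^ s) = 1 + (Nmat n) ^ (2 ^ s) := by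
  induction s with
  | zero => simpa using Jmat_eq n
  | succ s ih =>
    have h2 : 2 ^ (s + 1) = 2 ^ s * 2 := by ring
    rw [h2, pow_mul, ih, pow_mul]
    have step : (1 + (Nmat n) ^ (2 ^ s)) ^ 2 = 1 + ((Nmat n) ^ (2 ^ s)) ^ 2 := by
      have expand : (1 + (Nmat n) ^ (2 ^ s)) ^ 2
          = 1 + ((Nmat n) ^ (2 ^ s) + (Nmat n) ^ (2 ^ s))
            + (Nmat n) ^ (2 ^ s) * (Nmat n) ^ (2 ^ s) := by
        rw [sq, mul_add, add_mul, add_mul]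
        simp only [mul_one, one_mul]
        abel
      rw [expand, matrix_add_self, add_zero, ← sq]
    rw [step]

lemma Jmat_geom (n s : ℕ) :
    ∑ i ∈ Finset.range (2 ^ s), (Jmat n) ^ i = (Nmat n) ^ (2 ^ s - 1) := by
  induction s with
  | zero => simp
  | succ s ih =>
    have h2 : 2 ^ (s + 1) = 2 ^ s + 2 ^ s := by ring
    rw [h2, Finset.sum_range_add]
    have hpa : ∀ i, (Jmat n) ^ (2 ^ s + i) = (Jmat n) ^ (2 ^ s) * (Jmat n) ^ i := by
      intro i; rw [pow_add]
    simp only [hpa]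
    rw [← Finset.mul_sum, ih, Jmat_pow_two_pow, add_mul, one_mul, ← add_assoc,
      matrix_add_self, zero_add, ← pow_add]
    congr 1
    have : 1 ≤ 2 ^ s := Nat.one_le_two_pow
    omega

lemma iterate_eq (n : ℕ) (a : Fin n → ZMod 2) (k : ℕ) :
    (fun x : Fin n → ZMod 2 => (Jmat n).mulVec x + lastBasis n)^[k] a
      = ((Jmat n) ^ k).mulVec a
        + (∑ i ∈ Finset.range k, (Jmat n) ^ i).mulVec (lastBasis n) := by
  induction k with
  | zero => simp [Matrix.one_mulVec]
  | succ k ih =>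
    rw [Function.iterate_succ_apply', ih]
    simp only [Matrix.mulVec_add]
    rw [Matrix.mulVec_mulVec, Matrix.mulVec_mulVec, ← pow_succ']
    rw [Finset.sum_range_succ' (fun i => (Jmat n) ^ i) k]
    simp only [pow_zero, pow_succ']
    rw [← Finset.mul_sum, Matrix.add_mulVec, Matrix.one_mulVec, add_assoc]

lemma mulVec_Npow (n k : ℕ) (x : Fin n → ZMod 2) (i : Fin n) :
    ((Nmat n ^ k).mulVec x) i = if h : (i : ℕ) + k < n then x ⟨(i : ℕ) + k, h⟩ else 0 := by
  simp only [Matrix.mulVec, dotProduct]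
  by_cases h : (i : ℕ) + k < n
  · rw [dif_pos h, Finset.sum_eq_single (⟨(i : ℕ) + k, h⟩ : Fin n)]
    · rw [Nmat_pow, if_pos rfl, one_mul]
    · intro l _ hl
      have hl' : ¬ (l : ℕ) = (i : ℕ) + k := fun hc => hl (Fin.ext hc)
      rw [Nmat_pow, if_neg hl', zero_mul]
    · simp
  · rw [dif_neg h]
    apply Finset.sum_eq_zero
    intro l _
    have := l.isLt
    rw [Nmat_pow, if_neg (by omega), zero_mul]

lemma periodic_pt (s : ℕ) (hs : 1 ≤ s) (a : Fin (2 ^ s - 1) → ZMod 2) :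
    (fun x : Fin (2 ^ s - 1) → ZMod 2 =>
        (Jmat (2 ^ s - 1)).mulVec x + lastBasis (2 ^ s - 1))^[2 ^ s] a = a := by
  have h1 : 1 ≤ 2 ^ s := Nat.one_le_two_pow
  rw [iterate_eq, Jmat_geom, Jmat_pow_two_pow, Nmat_pow_n _ _ (by omega),
    Nmat_pow_n _ _ (by omega), add_zero, Matrix.one_mulVec, Matrix.zero_mulVec, add_zero]

lemma not_periodic_pt (s : ℕ) (hs : 1 ≤ s) (a : Fin (2 ^ s - 1) → ZMod 2) :
    (fun x : Fin (2 ^ s - 1) → ZMod 2 =>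
        (Jmat (2 ^ s - 1)).mulVec x + lastBasis (2 ^ s - 1))^[2 ^ (s - 1)] a ≠ a := by
  have hh1 : 1 ≤ 2 ^ (s - 1) := Nat.one_le_two_pow
  have h2h : 2 ^ (s - 1) + 2 ^ (s - 1) = 2 ^ s := by
    rw [← two_mul, ← pow_succ']
    congr 1
    omega
  have hi0 : 2 ^ (s - 1) - 1 < 2 ^ s - 1 := by omega
  intro hcontra
  rw [iterate_eq, Jmat_geom, Jmat_pow_two_pow, Matrix.add_mulVec,
    Matrix.one_mulVec] at hcontra
  have hx := congrFun hcontra ⟨2 ^ (s - 1) - 1, hi0⟩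
  simp only [Pi.add_apply, mulVec_Npow] at hx
  rw [dif_neg (show ¬ (2 ^ (s - 1) - 1 + 2 ^ (s - 1) < 2 ^ s - 1) by omega),
    dif_pos (show 2 ^ (s - 1) - 1 + (2 ^ (s - 1) - 1) < 2 ^ s - 1 by omega)] at hx
  simp only [lastBasis] at hx
  rw [if_pos (show 2 ^ (s - 1) - 1 + (2 ^ (s - 1) - 1) = 2 ^ s - 1 - 1 by omega)] at hx
  rw [add_zero] at hx
  have : (1 : ZMod 2) = 0 := by
    have := add_eq_left.mp hx
    exact this
  exact one_ne_zero this

lemma key (s : ℕ) (hs : 1 ≤ s) (a : Fin (2 ^ s - 1) → ZMod 2) :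
    Set.ncard {b : Fin (2 ^ s - 1) → ZMod 2 |
        ∃ k : ℕ,
          (fun x : Fin (2 ^ s - 1) → ZMod 2 =>
              (Jmat (2 ^ s - 1)).mulVec x + lastBasis (2 ^ s - 1))^[k] a
            = b} = 2 ^ s := by
  set f := fun x : Fin (2 ^ s - 1) → ZMod 2 =>
      (Jmat (2 ^ s - 1)).mulVec x + lastBasis (2 ^ s - 1) with hf
  have hper : Function.IsPeriodicPt f (2 ^ s) a := periodic_pt s hs a
  have hM : Function.minimalPeriod f a = 2 ^ s := by
    have hdvd := hper.minimalPeriod_dvd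
    rcases (Nat.dvd_prime_pow Nat.prime_two).mp hdvd with ⟨r, hr, hrs⟩
    by_contra hne
    have hrlt : r < s := lt_of_le_of_ne hr (by rintro rfl; exact hne hrs)
    have : Function.IsPeriodicPt f (2 ^ (s - 1)) a := by
      rw [Function.isPeriodicPt_iff_minimalPeriod_dvd, hrs]
      exact pow_dvd_pow 2 (by omega)
    exact not_periodic_pt s hs a this
  have horb : {b : Fin (2 ^ s - 1) → ZMod 2 | ∃ k : ℕ, f^[k] a = b}
      = (fun k => f^[k] a) '' Set.Iio (2 ^ s) := by
    ext b
    constructor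
    · rintro ⟨k, rfl⟩
      refine ⟨k % 2 ^ s, Nat.mod_lt _ (by positivity), ?_⟩
      have h := Function.iterate_mod_minimalPeriod_eq (f := f) (x := a) (n := k)
      rw [hM] at h
      exact h
    · rintro ⟨k, _, rfl⟩
      exact ⟨k, rfl⟩
  rw [horb]
  have hinj := Function.iterate_injOn_Iio_minimalPeriod (f := f) (x := a)
  rw [hM] at hinj
  rw [Set.ncard_image_of_injOn hinj]
  rw [← Finset.coe_Iio, Set.ncard_coe_finset, Nat.card_Iio]

/-- For `t ≥ 2`, `n = 2^(t-1) - 1` and `v = (0,…,0,1)ᵀ` the last standard basis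
vector, every orbit on `F₂ⁿ` of the affine permutation `a ↦ J_n a + v` has length
exactly `2^(t-1) = n + 1`. -/
theorem stmt_15 (t : ℕ) (ht : 2 ≤ t) :
    ∀ a : Fin (2 ^ (t - 1) - 1) → ZMod 2,
      Set.ncard {b : Fin (2 ^ (t - 1) - 1) → ZMod 2 |
          ∃ k : ℕ,
            (fun x : Fin (2 ^ (t - 1) - 1) → ZMod 2 =>
                (Jmat (2 ^ (t - 1) - 1)).mulVec x + lastBasis (2 ^ (t - 1) - 1))^[k] a
              = b} = 2 ^ (t - 1) := by
  intro a
  exact key (t - 1) (by omega) a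
end
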